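/- Let u ⊆ {1,…,s} be nonempty, k ∈ {0,1,…,m−1}^{|u|}, and let i, i′ ∈ {0,…,2^m−1}. If C_{u,k}·(i⃗ ⊕ i⃗′) ≠ 0 then ∏_{j∈u} N_{i,i′,j} = 0; and if C_{u,k}·(i⃗ ⊕ i⃗′) = 0 then ∏_{j∈u} N_{i,i′,j} = (−1)^{w}, where w is the number of nonzero entries of ∇C_{u,k}·(i⃗ ⊕ i⃗′) ∈ F₂^{|u|} and ⊕ denotes componentwise addition in F₂^m. -/

import Mathlib

open Finset

noncomputable section

/-- The bit vector `i⃗ ∈ F₂^m` of the integer `i = Σ_{ℓ=1}^m i_ℓ 2^{ℓ-1}`. -/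
def bvec (m : ℕ) (i : ℕ) : Fin m → ZMod 2 :=
  fun ℓ => if Nat.testBit i ℓ.1 then 1 else 0

/-- The `(r+1)`-st row (i.e. `r` with 0-indexing) of an `m × m` matrix over `F₂`,
as a vector in `F₂^m`; junk value `0` if `r ≥ m` (never used under the hypotheses below). -/
def rowAt (m : ℕ) (A : Matrix (Fin m) (Fin m) (ZMod 2)) (r : ℕ) : Fin m → ZMod 2 :=
  fun ℓ => if h : r < m then A ⟨r, h⟩ ℓ else 0

/-- The stacked matrix `C_{u,k}`: for each `j ∈ u`, the first `k j` rows of `C j`. -/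
def stack {m s : ℕ} (C : Fin s → Matrix (Fin m) (Fin m) (ZMod 2))
    (u : Finset (Fin s)) (k : Fin s → ℕ) :
    Matrix ((j : {x // x ∈ u}) × Fin (k j.1)) (Fin m) (ZMod 2) :=
  fun p => rowAt m (C p.1.1) p.2.1

/-- `∇C_{u,k}`: the matrix whose rows are the `(k j + 1)`-st rows (1-indexed) of `C j`, `j ∈ u`. -/
def grad {m s : ℕ} (C : Fin s → Matrix (Fin m) (Fin m) (ZMod 2))
    (u : Finset (Fin s)) (k : Fin s → ℕ) :
    Matrix {x // x ∈ u} (Fin m) (ZMod 2) :=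
  fun j => rowAt m (C j.1) (k j.1)

/-- The coordinate `x_{ij} ∈ [0,1)` of the digital net generated by `C₁,…,C_s`:
`x_{ij} = Σ_{ℓ=1}^m y_ℓ 2^{-ℓ}` where `y = C_j · i⃗` over `F₂`. -/
def pt {m s : ℕ} (C : Fin s → Matrix (Fin m) (Fin m) (ZMod 2)) (i : ℕ) (j : Fin s) : ℝ :=
  ∑ ℓ : Fin m, (((C j).mulVec (bvec m i) ℓ).val : ℝ) / 2 ^ (ℓ.1 + 1)

/-- The factor `N`: with `M(x,x') = max{k ∈ ℕ₀ : ⌊2^k x⌋ = ⌊2^k x'⌋}` (the number of matching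
leading binary digits), `Nf x x' c` equals `1` if `M(x,x') > c` (equivalently the first `c+1`
binary digits match), `-1` if `M(x,x') = c` (the first `c` digits match but not `c+1`), and
`0` if `M(x,x') < c`. -/
def Nf (x x' : ℝ) (c : ℕ) : ℤ :=
  if ⌊(2:ℝ) ^ (c + 1) * x⌋ = ⌊(2:ℝ) ^ (c + 1) * x'⌋ then 1
  else if ⌊(2:ℝ) ^ c * x⌋ = ⌊(2:ℝ) ^ c * x'⌋ then -1
  else 0

/-- The gain coefficient `Γ_{u,k} = 2^{-m} Σ_{i=0}^{2^m-1} Σ_{i'=0}^{2^m-1} ∏_{j∈u} N_{i,i',j}`. -/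
def Gam {m s : ℕ} (C : Fin s → Matrix (Fin m) (Fin m) (ZMod 2))
    (u : Finset (Fin s)) (k : Fin s → ℕ) : ℚ :=
  (2 ^ m : ℚ)⁻¹ * ∑ i ∈ Finset.range (2 ^ m), ∑ i' ∈ Finset.range (2 ^ m),
      ∏ j ∈ u, (Nf (pt C i j) (pt C i' j) (k j) : ℚ)

/-! The `j`-th coordinate of point `i` is the dyadic fraction whose binary digits are the
entries of `C_j i⃗`, so `⌊2^c x_{ij}⌋ = ⌊2^c x_{i'j}⌋` exactly when the first `c` digits of
`C_j i⃗` and `C_j i⃗'` agree, i.e., over `F₂`, when the first `c` entries of `C_j (i⃗ ⊕ i⃗')`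
vanish. Thus `N_{i,i',j}` is `0` unless rows `1, …, k_j` of `C_j` annihilate `i⃗ ⊕ i⃗'`, and is
then `±1` according to whether row `k_j + 1` does. -/

open Matrix

def binPrefix (y : ℕ → ZMod 2) : ℕ → ℕ
  | 0 => 0
  | c + 1 => 2 * binPrefix y c + (y c).val

def binFrac (y : ℕ → ZMod 2) (n : ℕ) : ℝ :=
  ∑ ℓ ∈ range n, ((y ℓ).val : ℝ) / 2 ^ (ℓ + 1)

section BinaryDigits

variable (y y' : ℕ → ZMod 2)

lemma binPrefix_add_div_two_pow (c d : ℕ) : binPrefix y (c + d) / 2 ^ d = binPrefix y c := by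
  induction d with
  | zero => simp
  | succ d ih =>
    have hval := ZMod.val_lt (y (c + d))
    rw [pow_succ', ← Nat.div_div_eq_div_mul, ← add_assoc, binPrefix, ← ih]
    congr 1
    omega

lemma binPrefix_eq_iff (c : ℕ) : binPrefix y c = binPrefix y' c ↔ ∀ ℓ < c, y ℓ = y' ℓ := by
  induction c with
  | zero => simp [binPrefix]
  | succ c ih =>
    have hval := ZMod.val_lt (y c)
    have hval' := ZMod.val_lt (y' c)
    rw [Nat.forall_lt_succ_right, ← ih, ← (ZMod.val_injective 2).eq_iff, binPrefix, binPrefix]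
    omega

lemma binFrac_eq_binPrefix_div (n : ℕ) : binFrac y n = binPrefix y n / 2 ^ n := by
  induction n with
  | zero => simp [binFrac, binPrefix]
  | succ n ih =>
    rw [binFrac, sum_range_succ, ← binFrac, ih, binPrefix]
    push_cast
    field_simp
    ring

lemma floor_two_pow_mul_binFrac {c n : ℕ} (hc : c ≤ n) :
    ⌊(2 : ℝ) ^ c * binFrac y n⌋ = binPrefix y c := by
  obtain ⟨d, rfl⟩ := Nat.exists_eq_add_of_le hc
  have hscale : (2 : ℝ) ^ c * binFrac y (c + d) = (binPrefix y (c + d) : ℝ) / (2 ^ d : ℕ) := by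
    rw [binFrac_eq_binPrefix_div, pow_add]
    push_cast
    field_simp
  rw [hscale, ← Int.natCast_floor_eq_floor (by positivity), Nat.floor_div_eq_div,
    binPrefix_add_div_two_pow]

lemma floor_two_pow_mul_binFrac_eq_iff {c n : ℕ} (hc : c ≤ n) :
    ⌊(2 : ℝ) ^ c * binFrac y n⌋ = ⌊(2 : ℝ) ^ c * binFrac y' n⌋ ↔ ∀ ℓ < c, y ℓ = y' ℓ := by
  rw [floor_two_pow_mul_binFrac y hc, floor_two_pow_mul_binFrac y' hc, Nat.cast_inj,
    binPrefix_eq_iff]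

lemma Nf_binFrac {c n : ℕ} (hc : c < n) :
    Nf (binFrac y n) (binFrac y' n) c =
      if ∀ ℓ < c, y ℓ = y' ℓ then (if y c = y' c then 1 else -1) else 0 := by
  simp only [Nf, floor_two_pow_mul_binFrac_eq_iff y y' hc,
    floor_two_pow_mul_binFrac_eq_iff y y' hc.le, Nat.forall_lt_succ_right]
  split_ifs <;> simp_all

end BinaryDigits

lemma rowAt_of_lt {m : ℕ} (A : Matrix (Fin m) (Fin m) (ZMod 2)) {r : ℕ} (hr : r < m) :
    rowAt m A r = A ⟨r, hr⟩ :=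
  funext fun _ => dif_pos hr

lemma rowAt_of_le {m : ℕ} (A : Matrix (Fin m) (Fin m) (ZMod 2)) {r : ℕ} (hr : m ≤ r) :
    rowAt m A r = 0 :=
  funext fun _ => dif_neg hr.not_gt

/-- Rows of index `≥ m` are `rowAt`'s junk value `0`, so the digit sequence can be padded with
zeros to any length `n ≥ m`. -/
lemma pt_eq_binFrac {m s n : ℕ} (C : Fin s → Matrix (Fin m) (Fin m) (ZMod 2)) (i : ℕ)
    (j : Fin s) (hn : m ≤ n) : pt C i j = binFrac (fun r => rowAt m (C j) r ⬝ᵥ bvec m i) n := by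
  rw [pt, binFrac, ← sum_subset (range_subset_range.2 hn), ← Fin.sum_univ_eq_sum_range]
  · refine sum_congr rfl fun ℓ _ => ?_
    rw [rowAt_of_lt _ ℓ.is_lt]
    rfl
  · intro r _ hr
    simp [rowAt_of_le _ (not_lt.1 (mem_range.not.1 hr))]

lemma Nf_pt {m s : ℕ} (C : Fin s → Matrix (Fin m) (Fin m) (ZMod 2)) (i i' : ℕ) (j : Fin s)
    (c : ℕ) :
    Nf (pt C i j) (pt C i' j) c =
      if ∀ r < c, rowAt m (C j) r ⬝ᵥ (bvec m i + bvec m i') = 0 then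
        (if rowAt m (C j) c ⬝ᵥ (bvec m i + bvec m i') = 0 then 1 else -1)
      else 0 := by
  rw [pt_eq_binFrac C i j (n := m + c + 1) (by omega),
    pt_eq_binFrac C i' j (n := m + c + 1) (by omega), Nf_binFrac _ _ (by omega)]
  simp only [dotProduct_add, add_eq_zero_iff_eq_neg, CharTwo.neg_eq]

lemma stack_mulVec_eq_zero_iff {m s : ℕ} (C : Fin s → Matrix (Fin m) (Fin m) (ZMod 2))
    (u : Finset (Fin s)) (k : Fin s → ℕ) (v : Fin m → ZMod 2) :
    stack C u k *ᵥ v = 0 ↔ ∀ j ∈ u, ∀ r < k j, rowAt m (C j) r ⬝ᵥ v = 0 := by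
  refine funext_iff.trans ⟨fun h j hj r hr => h ⟨⟨j, hj⟩, ⟨r, hr⟩⟩, ?_⟩
  rintro h ⟨⟨j, hj⟩, r⟩
  exact h j hj r r.2

theorem statement_general (m s : ℕ)
    (C : Fin s → Matrix (Fin m) (Fin m) (ZMod 2))
    (u : Finset (Fin s))
    (k : Fin s → ℕ)
    (i i' : ℕ) :
    ((stack C u k).mulVec (bvec m i + bvec m i') ≠ 0 →
      ∏ j ∈ u, Nf (pt C i j) (pt C i' j) (k j) = 0) ∧
    ((stack C u k).mulVec (bvec m i + bvec m i') = 0 →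
      ∏ j ∈ u, Nf (pt C i j) (pt C i' j) (k j) =
        (-1 : ℤ) ^ (Finset.univ.filter (fun j : {x // x ∈ u} =>
          (grad C u k).mulVec (bvec m i + bvec m i') j ≠ 0)).card) := by
  set v := bvec m i + bvec m i'
  constructor
  · intro hne
    obtain ⟨j, hj, r, hr, hrow⟩ : ∃ j ∈ u, ∃ r < k j, rowAt m (C j) r ⬝ᵥ v ≠ 0 := by
      simpa [stack_mulVec_eq_zero_iff] using hne
    exact prod_eq_zero hj (by rw [Nf_pt, if_neg fun h => hrow (h r hr)])
  · intro hzero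
    rw [stack_mulVec_eq_zero_iff] at hzero
    calc ∏ j ∈ u, Nf (pt C i j) (pt C i' j) (k j)
        = ∏ j ∈ u.attach, if (grad C u k *ᵥ v) j ≠ 0 then -1 else 1 := by
          rw [← prod_attach]
          refine prod_congr rfl fun j _ => ?_
          rw [Nf_pt, if_pos (hzero j j.2)]
          exact (ite_not _ _ _).symm
      _ = _ := by rw [univ_eq_attach, prod_ite, prod_const, prod_const_one, mul_one]

theorem statement (m s : ℕ) (hm : 1 ≤ m) (hs : 1 ≤ s)
    (C : Fin s → Matrix (Fin m) (Fin m) (ZMod 2))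
    (u : Finset (Fin s)) (hu : u.Nonempty)
    (k : Fin s → ℕ) (hk : ∀ j ∈ u, k j ≤ m - 1)
    (i i' : ℕ) (hi : i < 2 ^ m) (hi' : i' < 2 ^ m) :
    ((stack C u k).mulVec (bvec m i + bvec m i') ≠ 0 →
      ∏ j ∈ u, Nf (pt C i j) (pt C i' j) (k j) = 0) ∧
    ((stack C u k).mulVec (bvec m i + bvec m i') = 0 →
      ∏ j ∈ u, Nf (pt C i j) (pt C i' j) (k j) =
        (-1 : ℤ) ^ (Finset.univ.filter (fun j : {x // x ∈ u} =>
          (grad C u k).mulVec (bvec m i + bvec m i') j ≠ 0)).card) :=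
  statement_general m s C u k i i'

end
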